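/- Define p̃(d) = (1 + B(d−1, 1/2)/B((d−1)/2, 1/2))^{−1}. Then p̃ is a decreasing function of d for d ≥ 3, p̃(3) = 3/5, and p̃(d) → (1 + 1/√2)^{−1} as d → ∞. -/

import Mathlib

open MeasureTheory Matrix Real RealInnerProductSpace

noncomputable def frobNorm {d : ℕ} (A : Matrix (Fin d) (Fin d) ℝ) : ℝ :=
  Real.sqrt (∑ i, ∑ j, A i j ^ 2)

noncomputable def nuclearNorm {d : ℕ} (A : Matrix (Fin d) (Fin d) ℝ) : ℝ :=
  ∑ i, Real.sqrt (((show (Aᵀ * A).IsHermitian by simpa using Matrix.isHermitian_conjTranspose_mul_self A)).eigenvalues i)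

/-- `μ` is the uniform (rotation-invariant) probability distribution on the unit
sphere `S^{d-1} ⊂ ℝ^d`. -/
def IsUniformOnSphere {d : ℕ} (μ : Measure (EuclideanSpace ℝ (Fin d))) : Prop :=
  IsProbabilityMeasure μ ∧ (∀ᵐ x ∂μ, ‖x‖ = 1) ∧
  ∀ Q : Matrix (Fin d) (Fin d) ℝ, Qᵀ * Q = 1 →
    Measure.map (fun x => Matrix.toEuclideanLin Q x) μ = μ

/-- The Beta function. -/
noncomputable def Beta (m n : ℝ) : ℝ := Real.Gamma m * Real.Gamma n / Real.Gamma (m + n)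

noncomputable def ptilde (d : ℕ) : ℝ :=
  (1 + Beta ((d : ℝ) - 1) (1/2) / Beta (((d : ℝ) - 1)/2) (1/2))⁻¹

def A2 : Matrix (Fin 2) (Fin 2) ℝ := !![0, -1; 1, 0]

noncomputable def rot2 (θ : ℝ) : Matrix (Fin 2) (Fin 2) ℝ :=
  !![Real.cos θ, -Real.sin θ; Real.sin θ, Real.cos θ]

/-!
With `g x = Γ(x + 1/2) / Γ(x)` one has `B(m, 1/2) / B(m/2, 1/2) = g(m/2) / g(m)`, and
`g(x + 1/2) g(x) = x`. Log-convexity of `Γ` gives `g x ≤ g (x + 1/2)`, hence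
`x - 1/2 ≤ g(x)^2 ≤ x`, which yields the limit `1/√2` of the Beta ratio. Monotonicity in `d`
needs the sharper bound `x - 1/4 < g(x)^2`: the quotient `g(x)^2 / (x - 1/4)` strictly
decreases under `x ↦ x + 1` (a polynomial inequality, via `g(x + 1) = (x + 1/2)/x · g(x)`) and
tends to `1`.
-/

open Filter Topology

noncomputable def gammaHalfRatio (x : ℝ) : ℝ := Gamma (x + 1/2) / Gamma x

lemma tendsto_one_sub_mul_inv (c : ℝ) :
    Tendsto (fun x : ℝ => 1 - c * x⁻¹) atTop (𝓝 1) := by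
  simpa using tendsto_const_nhds.sub (tendsto_inv_atTop_zero.const_mul c)

section gammaHalfRatio

variable {x : ℝ}

lemma gammaHalfRatio_pos (hx : 0 < x) : 0 < gammaHalfRatio x :=
  div_pos (Gamma_pos_of_pos (by linarith)) (Gamma_pos_of_pos hx)

lemma gammaHalfRatio_add_half_mul (hx : 0 < x) :
    gammaHalfRatio (x + 1/2) * gammaHalfRatio x = x := by
  have := (Gamma_pos_of_pos (by linarith : 0 < x + 1/2)).ne'
  rw [gammaHalfRatio, gammaHalfRatio, show x + 1/2 + 1/2 = x + 1 by ring,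
    Gamma_add_one hx.ne']
  field_simp

lemma gammaHalfRatio_add_one (hx : 0 < x) :
    gammaHalfRatio (x + 1) = (x + 1/2) / x * gammaHalfRatio x := by
  have := (Gamma_pos_of_pos hx).ne'
  rw [gammaHalfRatio, gammaHalfRatio, add_right_comm, Gamma_add_one (by positivity),
    Gamma_add_one hx.ne']
  field_simp

lemma sq_Gamma_add_half_le (hx : 0 < x) : Gamma (x + 1/2) ^ 2 ≤ Gamma x * Gamma (x + 1) := by
  have h := Gamma_mul_add_mul_le_rpow_Gamma_mul_rpow_Gamma hx (by linarith : 0 < x + 1)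
    (by norm_num : (0 : ℝ) < 1/2) (by norm_num : (0 : ℝ) < 1/2) (by norm_num)
  rw [show 1/2 * x + 1/2 * (x + 1) = x + 1/2 by ring,
    ← mul_rpow (Gamma_pos_of_pos hx).le (Gamma_pos_of_pos (by linarith)).le,
    ← sqrt_eq_rpow] at h
  exact (le_sqrt (Gamma_pos_of_pos (by linarith)).le (by positivity)).1 h

lemma gammaHalfRatio_le_add_half (hx : 0 < x) : gammaHalfRatio x ≤ gammaHalfRatio (x + 1/2) := by
  rw [gammaHalfRatio, gammaHalfRatio, show x + 1/2 + 1/2 = x + 1 by ring,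
    div_le_div_iff₀ (Gamma_pos_of_pos hx) (Gamma_pos_of_pos (by linarith))]
  linarith [sq_Gamma_add_half_le hx]

lemma sq_gammaHalfRatio_le (hx : 0 < x) : gammaHalfRatio x ^ 2 ≤ x :=
  calc gammaHalfRatio x ^ 2 = gammaHalfRatio x * gammaHalfRatio x := sq _
    _ ≤ gammaHalfRatio (x + 1/2) * gammaHalfRatio x :=
      mul_le_mul_of_nonneg_right (gammaHalfRatio_le_add_half hx) (gammaHalfRatio_pos hx).le
    _ = x := gammaHalfRatio_add_half_mul hx

lemma sub_half_le_sq_gammaHalfRatio (hx : 1/2 < x) : x - 1/2 ≤ gammaHalfRatio x ^ 2 := by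
  have hy : 0 < x - 1/2 := by linarith
  have h := gammaHalfRatio_add_half_mul hy
  rw [sub_add_cancel] at h
  calc x - 1/2 = gammaHalfRatio x * gammaHalfRatio (x - 1/2) := h.symm
    _ ≤ gammaHalfRatio x * gammaHalfRatio x := by
      refine mul_le_mul_of_nonneg_left ?_ (gammaHalfRatio_pos (by linarith)).le
      simpa using gammaHalfRatio_le_add_half hy
    _ = gammaHalfRatio x ^ 2 := (sq _).symm

lemma tendsto_sq_gammaHalfRatio_div_self :
    Tendsto (fun x => gammaHalfRatio x ^ 2 / x) atTop (𝓝 1) := by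
  refine tendsto_of_tendsto_of_tendsto_of_le_of_le' (tendsto_one_sub_mul_inv (1/2))
    tendsto_const_nhds ?_ ?_
  · filter_upwards [eventually_gt_atTop (1/2)] with x hx
    rw [le_div_iff₀ (by linarith)]
    have := sub_half_le_sq_gammaHalfRatio hx
    field_simp
    linarith
  · filter_upwards [eventually_gt_atTop 0] with x hx
    exact div_le_one_of_le₀ (sq_gammaHalfRatio_le hx) hx.le

lemma tendsto_sq_gammaHalfRatio_div_sub_quarter :
    Tendsto (fun x => gammaHalfRatio x ^ 2 / (x - 1/4)) atTop (𝓝 1) := by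
  have h := tendsto_sq_gammaHalfRatio_div_self.div (tendsto_one_sub_mul_inv (1/4)) one_ne_zero
  rw [div_one] at h
  refine h.congr' ?_
  filter_upwards [eventually_gt_atTop 1] with x hx
  have : x - 1/4 ≠ 0 := by linarith
  simp only [Pi.div_apply]
  field_simp

lemma sq_gammaHalfRatio_div_sub_quarter_add_one_lt (hx : 1/4 < x) :
    gammaHalfRatio (x + 1) ^ 2 / (x + 1 - 1/4) < gammaHalfRatio x ^ 2 / (x - 1/4) := by
  have hg := pow_pos (gammaHalfRatio_pos (by linarith : 0 < x)) 2
  rw [gammaHalfRatio_add_one (by linarith), mul_pow, div_pow,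
    div_lt_div_iff₀ (by linarith) (by linarith)]
  field_simp
  nlinarith

lemma sub_quarter_lt_sq_gammaHalfRatio (hx : 0 < x) : x - 1/4 < gammaHalfRatio x ^ 2 := by
  rcases le_or_gt x (1/4) with hx' | hx'
  · nlinarith [gammaHalfRatio_pos hx]
  set φ : ℕ → ℝ := fun n => gammaHalfRatio (x + n) ^ 2 / (x + n - 1/4)
  have hφ : StrictAnti φ := strictAnti_nat_of_succ_lt fun n => by
    have hn : 1/4 < x + n := by linarith [n.cast_nonneg (α := ℝ)]
    simpa [φ, add_assoc] using sq_gammaHalfRatio_div_sub_quarter_add_one_lt hn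
  have hlim : Tendsto φ atTop (𝓝 1) := tendsto_sq_gammaHalfRatio_div_sub_quarter.comp
    (tendsto_atTop_add_const_left _ _ tendsto_natCast_atTop_atTop)
  have h1 : 1 < φ 0 := (hφ.antitone.le_of_tendsto hlim 1).trans_lt (hφ zero_lt_one)
  have hφ0 : φ 0 = gammaHalfRatio x ^ 2 / (x - 1/4) := by simp [φ]
  exact (one_lt_div (by linarith)).1 (hφ0 ▸ h1)

end gammaHalfRatio

noncomputable def betaRatio (m : ℝ) : ℝ := Beta m (1/2) / Beta (m/2) (1/2)

lemma Beta_half_right (m : ℝ) : Beta m (1/2) = Gamma (1/2) / gammaHalfRatio m := by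
  rw [Beta, gammaHalfRatio, div_div_eq_mul_div, mul_comm]

lemma betaRatio_eq (m : ℝ) : betaRatio m = gammaHalfRatio (m/2) / gammaHalfRatio m := by
  rw [betaRatio, Beta_half_right, Beta_half_right,
    div_div_div_cancel_left' _ _ (Gamma_pos_of_pos one_half_pos).ne']

section betaRatio

variable {m : ℝ}

lemma betaRatio_pos (hm : 0 < m) : 0 < betaRatio m := by
  rw [betaRatio_eq]
  exact div_pos (gammaHalfRatio_pos (half_pos hm)) (gammaHalfRatio_pos hm)

lemma betaRatio_two : betaRatio 2 = 2/3 := by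
  have := gammaHalfRatio_pos one_pos
  rw [betaRatio_eq, show (2 : ℝ) = 1 + 1 by norm_num, gammaHalfRatio_add_one one_pos]
  field_simp
  norm_num

lemma betaRatio_lt_add_one (hm : 0 < m) : betaRatio m < betaRatio (m + 1) := by
  have hy : 0 < m / 2 := half_pos hm
  have hb0 := gammaHalfRatio_pos (x := m / 2 + 1/2) (by linarith)
  have hc0 := gammaHalfRatio_pos hm
  have key : gammaHalfRatio (m / 2) * (m + 1/2) < gammaHalfRatio (m / 2 + 1/2) * m := by
    -- times `gammaHalfRatio (m/2 + 1/2)`, this is `m/2 + 1/4 < gammaHalfRatio (m/2 + 1/2) ^ 2`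
    have hab := gammaHalfRatio_add_half_mul hy
    have hb := sub_quarter_lt_sq_gammaHalfRatio (x := m / 2 + 1/2) (by linarith)
    have h := mul_lt_mul_of_pos_left hb hy
    refine lt_of_mul_lt_mul_right ?_ hb0.le
    nlinarith
  rw [betaRatio_eq, betaRatio_eq, show (m + 1) / 2 = m / 2 + 1/2 by ring,
    gammaHalfRatio_add_one hm, div_lt_div_iff₀ hc0 (by positivity)]
  calc gammaHalfRatio (m / 2) * ((m + 1/2) / m * gammaHalfRatio m)
      = gammaHalfRatio (m / 2) * (m + 1/2) / m * gammaHalfRatio m := by ring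
    _ < gammaHalfRatio (m / 2 + 1/2) * gammaHalfRatio m :=
      mul_lt_mul_of_pos_right ((div_lt_iff₀ hm).2 key) hc0

lemma tendsto_betaRatio : Tendsto betaRatio atTop (𝓝 (1 / √2)) := by
  have hsq : Tendsto (fun m => betaRatio m ^ 2) atTop (𝓝 (1/2)) := by
    have hg := tendsto_sq_gammaHalfRatio_div_self
    have h := ((hg.comp (tendsto_id.atTop_div_const two_pos)).div hg one_ne_zero).div_const 2
    rw [div_one] at h
    refine h.congr' ?_
    filter_upwards [eventually_gt_atTop 0] with m hm
    have := (gammaHalfRatio_pos hm).ne'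
    simp only [Pi.div_apply, Function.comp_apply, id, betaRatio_eq]
    field_simp
  have h := hsq.sqrt
  rw [one_div, sqrt_inv, ← one_div] at h
  refine h.congr' ?_
  filter_upwards [eventually_gt_atTop 0] with m hm
  exact sqrt_sq (betaRatio_pos hm).le

end betaRatio

lemma ptilde_eq (d : ℕ) : ptilde d = (1 + betaRatio (d - 1))⁻¹ := rfl

lemma ptilde_succ_lt {n : ℕ} (hn : 2 ≤ n) : ptilde (n + 1) < ptilde n := by
  have hm : (0 : ℝ) < n - 1 := by
    have : (2 : ℝ) ≤ n := by exact_mod_cast hn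
    linarith
  have h := betaRatio_lt_add_one hm
  rw [sub_add_cancel] at h
  rw [ptilde_eq, ptilde_eq, Nat.cast_succ, add_sub_cancel_right]
  gcongr
  linarith [betaRatio_pos hm]

theorem stmt13 :
    (∀ d e : ℕ, 3 ≤ d → d < e → ptilde e < ptilde d) ∧
    ptilde 3 = 3 / 5 ∧
    Filter.Tendsto ptilde Filter.atTop (nhds (1 + 1 / Real.sqrt 2)⁻¹) := by
  refine ⟨fun d e hd hde => ?_, ?_, ?_⟩
  · exact Nat.rel_of_forall_rel_succ_of_le_of_lt (· > ·) (fun _ hn => ptilde_succ_lt hn)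
      (by omega : 2 ≤ d) hde
  · rw [ptilde_eq]
    norm_num [betaRatio_two]
  · have hshift : Tendsto (fun d : ℕ => (d : ℝ) - 1) atTop atTop := by
      simpa [sub_eq_add_neg] using tendsto_atTop_add_const_right _ (-1) tendsto_natCast_atTop_atTop
    exact ((tendsto_const_nhds.add tendsto_betaRatio).inv₀ (by positivity)).comp hshift
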